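/- Let d ≥ 2 and g ∈ GL(d,ℝ). Suppose g = k₁·diag(α)·k₁' = k₂·diag(α)·k₂' are two singular value decompositions of g (with the same diagonal part, as the singular values are unique). Then sin∠(k₁·e₁, k₂·e₁) ≤ (α 1)/(α 0). In particular, if the series of choices made in a Cartan (KAK) decomposition of g is changed, the resulting point [k·e₁] of projective space changes by at most (α 1)/(α 0) in the sine-of-angle distance. -/

import Mathlib

/-!
If `α 0 = α 1` the bound is `sin ≤ 1`. Otherwise `α 0 ^ 2` is a simple eigenvalue of
`D = diag (α ^ 2)`, and `g gᵀ = k₁ D k₁ᵀ = k₂ D k₂ᵀ`. Then the orthogonal matrix `k₁ᵀ k₂`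
commutes with `D`, so it preserves the eigenline `ℝ e₁` and acts on it by `±1`; hence
`k₂ e₁ = ± k₁ e₁` and the sine of their angle vanishes.
-/

open Matrix

/-- The action of a `d × d` real matrix on Euclidean `ℝ^d`. -/
noncomputable def appE {d : ℕ} (M : Matrix (Fin d) (Fin d) ℝ)
    (v : EuclideanSpace ℝ (Fin d)) : EuclideanSpace ℝ (Fin d) :=
  Matrix.toEuclideanLin M v

/-- `IsSVD g k α k'` means `g = k · diag(α) · k'` is a singular value decomposition:
`k, k'` are orthogonal and `α` is positive and nonincreasing. -/
def IsSVD {d : ℕ} (g k : Matrix (Fin d) (Fin d) ℝ) (α : Fin d → ℝ)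
    (k' : Matrix (Fin d) (Fin d) ℝ) : Prop :=
  k * kᵀ = 1 ∧ k' * k'ᵀ = 1 ∧ (∀ i, 0 < α i) ∧ Antitone α ∧
    g = k * Matrix.diagonal α * k'

/-- The sine of the angle between two vectors of Euclidean `ℝ^d`. -/
noncomputable def sinAngle {d : ℕ} (u v : EuclideanSpace ℝ (Fin d)) : ℝ :=
  Real.sin (InnerProductGeometry.angle u v)

/-- The first standard basis vector of Euclidean `ℝ^d`. -/
noncomputable def e1 {d : ℕ} (h : 0 < d) : EuclideanSpace ℝ (Fin d) :=
  EuclideanSpace.single ⟨0, h⟩ 1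

section OrthogonalConjugation

variable {n R : Type*} [Fintype n] [DecidableEq n]

lemma Matrix.apply_eq_zero_of_diagonal_mul_eq_mul_diagonal [CommRing R] [NoZeroDivisors R]
    {a : n → R} {Q : Matrix n n R} (h : diagonal a * Q = Q * diagonal a) {i j : n}
    (hij : a i ≠ a j) : Q i j = 0 := by
  have hent := congrFun (congrFun h i) j
  rw [diagonal_mul, mul_diagonal] at hent
  have : (a i - a j) * Q i j = 0 := by linear_combination hent
  exact (mul_eq_zero.mp this).resolve_left (sub_ne_zero.mpr hij)

lemma Matrix.sq_apply_self_eq_one_of_transpose_mul_self [Semiring R]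
    {Q : Matrix n n R} (hQ : Qᵀ * Q = 1) {i : n} (hcol : ∀ j ≠ i, Q j i = 0) :
    Q i i ^ 2 = 1 := by
  have hii := congrFun (congrFun hQ i) i
  rw [mul_apply, Finset.sum_eq_single i (fun j _ hj => by simp [hcol j hj]) (by simp),
    one_apply_eq, transpose_apply] at hii
  rw [sq, hii]

lemma Matrix.sq_transpose_mul_apply_self_eq_one [CommRing R] [NoZeroDivisors R]
    {k₁ k₂ : Matrix n n R} (hk₁ : k₁ * k₁ᵀ = 1) (hk₂ : k₂ * k₂ᵀ = 1) {a : n → R}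
    (h : k₁ * diagonal a * k₁ᵀ = k₂ * diagonal a * k₂ᵀ) {i : n} (ha : ∀ j ≠ i, a j ≠ a i) :
    (k₁ᵀ * k₂) i i ^ 2 = 1 := by
  have hk₁' : k₁ᵀ * k₁ = 1 := mul_eq_one_comm.mp hk₁
  have hk₂' : k₂ᵀ * k₂ = 1 := mul_eq_one_comm.mp hk₂
  have hcomm : diagonal a * (k₁ᵀ * k₂) = (k₁ᵀ * k₂) * diagonal a :=
    calc diagonal a * (k₁ᵀ * k₂) = k₁ᵀ * (k₁ * diagonal a * k₁ᵀ) * k₂ := by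
          simp only [Matrix.mul_assoc, ← Matrix.mul_assoc k₁ᵀ k₁, hk₁', Matrix.one_mul]
      _ = k₁ᵀ * (k₂ * diagonal a * k₂ᵀ) * k₂ := by rw [h]
      _ = (k₁ᵀ * k₂) * diagonal a := by
          simp only [Matrix.mul_assoc, hk₂', Matrix.mul_one]
  have horth : (k₁ᵀ * k₂)ᵀ * (k₁ᵀ * k₂) = 1 := by
    rw [transpose_mul, transpose_transpose, Matrix.mul_assoc, ← Matrix.mul_assoc k₁, hk₁,
      Matrix.one_mul, hk₂']
  exact sq_apply_self_eq_one_of_transpose_mul_self horth fun j hj =>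
    apply_eq_zero_of_diagonal_mul_eq_mul_diagonal hcomm (ha j hj)

end OrthogonalConjugation

section EuclideanColumns

variable {n : Type*} [Fintype n] [DecidableEq n]

lemma inner_toEuclideanLin_single (A B : Matrix n n ℝ) (i : n) :
    inner ℝ (toEuclideanLin A (EuclideanSpace.single i 1))
      (toEuclideanLin B (EuclideanSpace.single i 1)) = (Aᵀ * B) i i := by
  simp [toEuclideanLin, mulVec, dotProduct, PiLp.inner_apply, mul_apply, Pi.single_apply,
    mul_comm]

lemma norm_toEuclideanLin_single_of_orthogonal {A : Matrix n n ℝ} (hA : A * Aᵀ = 1) (i : n) :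
    ‖toEuclideanLin A (EuclideanSpace.single i 1)‖ = 1 := by
  rw [← pow_eq_one_iff_of_nonneg (norm_nonneg _) two_ne_zero, ← real_inner_self_eq_norm_sq,
    inner_toEuclideanLin_single, mul_eq_one_comm.mp hA, one_apply_eq]

end EuclideanColumns

lemma sinAngle_eq_zero_of_inner_sq_eq_one {d : ℕ} {u v : EuclideanSpace ℝ (Fin d)}
    (hu : ‖u‖ = 1) (hv : ‖v‖ = 1) (h : inner ℝ u v ^ 2 = (1 : ℝ)) : sinAngle u v = 0 := by
  rw [sinAngle, InnerProductGeometry.angle, hu, hv, mul_one, div_one, Real.sin_arccos, h,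
    sub_self, Real.sqrt_zero]

lemma IsSVD.mul_transpose_eq {d : ℕ} {g k k' : Matrix (Fin d) (Fin d) ℝ} {α : Fin d → ℝ}
    (h : IsSVD g k α k') : g * gᵀ = k * diagonal (fun i => α i ^ 2) * kᵀ := by
  obtain ⟨-, hk', -, -, rfl⟩ := h
  simp only [transpose_mul, diagonal_transpose, Matrix.mul_assoc]
  rw [← Matrix.mul_assoc k', hk', Matrix.one_mul, ← Matrix.mul_assoc (diagonal α),
    diagonal_mul_diagonal]
  simp only [sq]

/-- If `g = k₁·diag(α)·k₁' = k₂·diag(α)·k₂'` are two singular value decompositions of the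
same matrix, then `sin∠(k₁·e₁, k₂·e₁) ≤ (α 1)/(α 0)`: the point `[k·e₁]` of projective space
obtained from a KAK decomposition is well defined up to `(α 1)/(α 0)`. -/
theorem stmt7 (d : ℕ) (hd : 2 ≤ d) (g : Matrix (Fin d) (Fin d) ℝ)
    (k₁ k₁' k₂ k₂' : Matrix (Fin d) (Fin d) ℝ) (α : Fin d → ℝ)
    (h₁ : IsSVD g k₁ α k₁') (h₂ : IsSVD g k₂ α k₂') :
    sinAngle (appE k₁ (e1 (by omega))) (appE k₂ (e1 (by omega)))
      ≤ α ⟨1, by omega⟩ / α ⟨0, by omega⟩ := by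
  obtain ⟨hk₁, -, hα, hanti, -⟩ := id h₁
  rcases (hanti (Fin.mk_le_mk.mpr zero_le_one) : α ⟨1, _⟩ ≤ α ⟨0, _⟩).eq_or_lt with heq | hlt
  · rw [heq, div_self (hα _).ne']
    exact Real.sin_le_one _
  · have hsimple : ∀ j ≠ (⟨0, by omega⟩ : Fin d), α j ^ 2 ≠ α ⟨0, by omega⟩ ^ 2 := fun j hj =>
      have hj1 : (⟨1, by omega⟩ : Fin d) ≤ j :=
        Fin.le_def.mpr (Nat.one_le_iff_ne_zero.mpr (Fin.val_ne_of_ne hj))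
      (pow_lt_pow_left₀ ((hanti hj1).trans_lt hlt) (hα j).le two_ne_zero).ne
    have hsq := Matrix.sq_transpose_mul_apply_self_eq_one hk₁ h₂.1
      (h₁.mul_transpose_eq.symm.trans h₂.mul_transpose_eq) hsimple
    have hzero : sinAngle (appE k₁ (e1 _)) (appE k₂ (e1 _)) = 0 :=
      sinAngle_eq_zero_of_inner_sq_eq_one (norm_toEuclideanLin_single_of_orthogonal hk₁ _)
        (norm_toEuclideanLin_single_of_orthogonal h₂.1 _)
        (hsq ▸ congrArg (· ^ 2) (inner_toEuclideanLin_single k₁ k₂ _))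
    rw [hzero]
    exact (div_pos (hα _) (hα _)).le
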